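/- arXiv:2407.03986 — 3 statements merged into one kernel-verified Lean document; each statement's English description precedes it below -/
import Mathlib

section
/- Let θ ∈ (0,1) and β ∈ (0,n). For every nonnegative measurable f : ℝⁿ → ℝ and every x with Mf(x) > 0 and M_β f(x) > 0 finite, one has I_{θβ} f(x) ≤ C · (M_β f(x))^θ · (Mf(x))^{1−θ}, where I_{θβ} f(x) = ∫ f(y)/|x−y|^{n−θβ} dy, M_β f(x) = sup_{r>0} r^{β−n} ∫_{B(x,r)} f, Mf is the Hardy–Littlewood maximal function, and C depends only on n, β, θ. -/
open MeasureTheory ENNReal Set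

/-- The (centered) Hardy–Littlewood maximal function, with values in `ℝ≥0∞`. -/
noncomputable def hlMaximal (n : ℕ) (f : EuclideanSpace ℝ (Fin n) → ℝ)
    (x : EuclideanSpace ℝ (Fin n)) : ℝ≥0∞ :=
  ⨆ (r : ℝ) (_ : 0 < r),
    (volume (Metric.ball x r))⁻¹ * ∫⁻ y in Metric.ball x r, ENNReal.ofReal |f y|

/-- The fractional maximal function of order `β`: `M_β f(x) = sup_{r>0} r^{β-n} ∫_{B(x,r)} |f|`. -/
noncomputable def fracMaximal (n : ℕ) (β : ℝ) (f : EuclideanSpace ℝ (Fin n) → ℝ)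
    (x : EuclideanSpace ℝ (Fin n)) : ℝ≥0∞ :=
  ⨆ (r : ℝ) (_ : 0 < r),
    ENNReal.ofReal (r ^ (β - (n : ℝ))) * ∫⁻ y in Metric.ball x r, ENNReal.ofReal |f y|

/-- The Riesz potential of order `γ`: `I_γ f(x) = ∫ f(y)/|x-y|^{n-γ} dy`. -/
noncomputable def rieszPot (n : ℕ) (γ : ℝ) (f : EuclideanSpace ℝ (Fin n) → ℝ)
    (x : EuclideanSpace ℝ (Fin n)) : ℝ≥0∞ :=
  ∫⁻ y, ENNReal.ofReal (f y) / ENNReal.ofReal (dist x y ^ ((n : ℝ) - γ))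

section Helpers
variable {n : ℕ}

lemma ball_le_hl (f : EuclideanSpace ℝ (Fin n) → ℝ) (x : EuclideanSpace ℝ (Fin n))
    {s : ℝ} (hs : 0 < s) :
    ∫⁻ y in Metric.ball x s, ENNReal.ofReal |f y| ≤
      hlMaximal n f x * volume (Metric.ball x s) := by
  have hv0 : volume (Metric.ball x s) ≠ 0 := (Metric.measure_ball_pos volume x hs).ne'
  have hvt : volume (Metric.ball x s) ≠ ⊤ := measure_ball_lt_top.ne
  have h : (volume (Metric.ball x s))⁻¹ * ∫⁻ y in Metric.ball x s, ENNReal.ofReal |f y| ≤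
      hlMaximal n f x :=
    le_iSup₂ (f := fun (r : ℝ) (_ : 0 < r) =>
      (volume (Metric.ball x r))⁻¹ * ∫⁻ y in Metric.ball x r, ENNReal.ofReal |f y|) s hs
  calc ∫⁻ y in Metric.ball x s, ENNReal.ofReal |f y|
      = volume (Metric.ball x s) *
        ((volume (Metric.ball x s))⁻¹ * ∫⁻ y in Metric.ball x s, ENNReal.ofReal |f y|) := by
        rw [← mul_assoc, ENNReal.mul_inv_cancel hv0 hvt, one_mul]
    _ ≤ volume (Metric.ball x s) * hlMaximal n f x := mul_le_mul_right h _
    _ = _ := mul_comm _ _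

lemma ball_le_frac (β : ℝ) (f : EuclideanSpace ℝ (Fin n) → ℝ) (x : EuclideanSpace ℝ (Fin n))
    {s : ℝ} (hs : 0 < s) :
    ∫⁻ y in Metric.ball x s, ENNReal.ofReal |f y| ≤
      fracMaximal n β f x * ENNReal.ofReal (s ^ ((n : ℝ) - β)) := by
  have hpow : (0 : ℝ) < s ^ (β - (n : ℝ)) := Real.rpow_pos_of_pos hs _
  have hne : ENNReal.ofReal (s ^ (β - (n : ℝ))) ≠ 0 := by
    simp [ENNReal.ofReal_eq_zero, not_le, hpow]
  have h : ENNReal.ofReal (s ^ (β - (n : ℝ))) *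
      ∫⁻ y in Metric.ball x s, ENNReal.ofReal |f y| ≤ fracMaximal n β f x :=
    le_iSup₂ (f := fun (r : ℝ) (_ : 0 < r) =>
      ENNReal.ofReal (r ^ (β - (n : ℝ))) * ∫⁻ y in Metric.ball x r, ENNReal.ofReal |f y|) s hs
  have key : (ENNReal.ofReal (s ^ (β - (n : ℝ))))⁻¹ = ENNReal.ofReal (s ^ ((n : ℝ) - β)) := by
    rw [← ENNReal.ofReal_inv_of_pos hpow, ← Real.rpow_neg hs.le, neg_sub]
  calc ∫⁻ y in Metric.ball x s, ENNReal.ofReal |f y|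
      = (ENNReal.ofReal (s ^ (β - (n : ℝ))))⁻¹ * (ENNReal.ofReal (s ^ (β - (n : ℝ))) *
          ∫⁻ y in Metric.ball x s, ENNReal.ofReal |f y|) := by
        rw [← mul_assoc, ENNReal.inv_mul_cancel hne ENNReal.ofReal_ne_top, one_mul]
    _ ≤ (ENNReal.ofReal (s ^ (β - (n : ℝ))))⁻¹ * fracMaximal n β f x := mul_le_mul_right h _
    _ = _ := by rw [key, mul_comm]

lemma near_mem {r d : ℝ} (hr : 0 < r) (hd : 0 < d) (hlt : d < r) :
    ∃ k : ℕ, d < r * 2 ^ (-(k : ℝ)) ∧ r * 2 ^ (-((k : ℝ) + 1)) ≤ d := by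
  have key : ∀ m : ℕ, (r / d ≤ 2 ^ ((m : ℝ) + 1)) → r * 2 ^ (-((m : ℝ) + 1)) ≤ d := by
    intro m hm
    have h2 : (0 : ℝ) < 2 ^ ((m : ℝ) + 1) := Real.rpow_pos_of_pos two_pos _
    rw [div_le_iff₀ hd] at hm
    rw [Real.rpow_neg (by norm_num), ← div_eq_mul_inv, div_le_iff₀ h2]
    linarith [hm]
  have hP : ∃ k : ℕ, r * 2 ^ (-((k : ℝ) + 1)) ≤ d := by
    obtain ⟨m, hm⟩ := exists_nat_ge (r / d)
    refine ⟨m, key m ?_⟩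
    calc r / d ≤ (m : ℝ) := hm
      _ ≤ 2 ^ (m : ℕ) := by exact_mod_cast (Nat.lt_two_pow_self (n := m)).le
      _ = 2 ^ ((m : ℕ) : ℝ) := (Real.rpow_natCast 2 m).symm
      _ ≤ 2 ^ ((m : ℝ) + 1) := by
          apply Real.rpow_le_rpow_of_exponent_le one_le_two; linarith
  classical
  refine ⟨Nat.find hP, ?_, Nat.find_spec hP⟩
  cases hk : Nat.find hP with
  | zero => norm_num; exact hlt
  | succ m =>
    have hlt' : ¬ (r * 2 ^ (-((m : ℝ) + 1)) ≤ d) := Nat.find_min hP (by omega)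
    push_neg at hlt'
    push_cast
    exact hlt'

lemma far_mem {r d : ℝ} (hr : 0 < r) (hge : r ≤ d) :
    ∃ k : ℕ, r * 2 ^ (k : ℝ) ≤ d ∧ d < r * 2 ^ ((k : ℝ) + 1) := by
  have hQ : ∃ k : ℕ, d < r * 2 ^ ((k : ℝ) + 1) := by
    obtain ⟨m, hm⟩ := exists_nat_ge (d / r)
    refine ⟨m, ?_⟩
    have h1 : d / r < 2 ^ ((m : ℝ) + 1) := by
      calc d / r ≤ (m : ℝ) := hm
        _ < 2 ^ (m : ℕ) := by exact_mod_cast Nat.lt_two_pow_self (n := m)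
        _ = 2 ^ ((m : ℕ) : ℝ) := (Real.rpow_natCast 2 m).symm
        _ ≤ 2 ^ ((m : ℝ) + 1) := by
            apply Real.rpow_le_rpow_of_exponent_le one_le_two; linarith
    rw [div_lt_iff₀ hr] at h1
    linarith [h1]
  classical
  refine ⟨Nat.find hQ, ?_, Nat.find_spec hQ⟩
  cases hk : Nat.find hQ with
  | zero => norm_num; exact hge
  | succ m =>
    have h' : ¬ (d < r * 2 ^ ((m : ℝ) + 1)) := Nat.find_min hQ (by omega)
    push_neg at h'
    push_cast
    exact h'

lemma near_id {r : ℝ} (hr : 0 < r) (γ nr : ℝ) (k : ℕ) :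
    (r * 2 ^ (-((k : ℝ) + 1))) ^ (γ - nr) * (r * 2 ^ (-(k : ℝ))) ^ nr
      = (r ^ γ * 2 ^ (nr - γ)) * ((2 : ℝ) ^ (-γ)) ^ (k : ℕ) := by
  have h2 : (0 : ℝ) < 2 := two_pos
  rw [← Real.rpow_natCast ((2 : ℝ) ^ (-γ)) k, ← Real.rpow_mul h2.le]
  calc (r * 2 ^ (-((k : ℝ) + 1))) ^ (γ - nr) * (r * 2 ^ (-(k : ℝ))) ^ nr
      = (r ^ (γ - nr) * r ^ nr) *
        ((2 : ℝ) ^ ((-((k : ℝ) + 1)) * (γ - nr)) * 2 ^ ((-(k : ℝ)) * nr)) := by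
        rw [Real.mul_rpow hr.le (Real.rpow_pos_of_pos h2 _).le,
            Real.mul_rpow hr.le (Real.rpow_pos_of_pos h2 _).le,
            ← Real.rpow_mul h2.le, ← Real.rpow_mul h2.le]; ring
    _ = r ^ (γ - nr + nr) *
        (2 : ℝ) ^ ((-((k : ℝ) + 1)) * (γ - nr) + (-(k : ℝ)) * nr) := by
        rw [← Real.rpow_add hr, ← Real.rpow_add h2]
    _ = r ^ γ * (2 : ℝ) ^ ((nr - γ) + (-γ) * (k : ℝ)) := by
        congr 1 <;> · congr 1; ring
    _ = (r ^ γ * 2 ^ (nr - γ)) * (2 : ℝ) ^ ((-γ) * (k : ℝ)) := by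
        rw [Real.rpow_add h2, mul_assoc]

lemma far_id {r : ℝ} (hr : 0 < r) (γ nr β : ℝ) (k : ℕ) :
    (r * 2 ^ (k : ℝ)) ^ (γ - nr) * (r * 2 ^ ((k : ℝ) + 1)) ^ (nr - β)
      = (r ^ (γ - β) * 2 ^ (nr - β)) * ((2 : ℝ) ^ (γ - β)) ^ (k : ℕ) := by
  have h2 : (0 : ℝ) < 2 := two_pos
  rw [← Real.rpow_natCast ((2 : ℝ) ^ (γ - β)) k, ← Real.rpow_mul h2.le]
  calc (r * 2 ^ (k : ℝ)) ^ (γ - nr) * (r * 2 ^ ((k : ℝ) + 1)) ^ (nr - β)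
      = (r ^ (γ - nr) * r ^ (nr - β)) *
        ((2 : ℝ) ^ ((k : ℝ) * (γ - nr)) * 2 ^ (((k : ℝ) + 1) * (nr - β))) := by
        rw [Real.mul_rpow hr.le (Real.rpow_pos_of_pos h2 _).le,
            Real.mul_rpow hr.le (Real.rpow_pos_of_pos h2 _).le,
            ← Real.rpow_mul h2.le, ← Real.rpow_mul h2.le]; ring
    _ = r ^ (γ - nr + (nr - β)) *
        (2 : ℝ) ^ ((k : ℝ) * (γ - nr) + ((k : ℝ) + 1) * (nr - β)) := by
        rw [← Real.rpow_add hr, ← Real.rpow_add h2]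
    _ = r ^ (γ - β) * (2 : ℝ) ^ ((nr - β) + (γ - β) * (k : ℝ)) := by
        congr 1 <;> · congr 1; ring
    _ = (r ^ (γ - β) * 2 ^ (nr - β)) * (2 : ℝ) ^ ((γ - β) * (k : ℝ)) := by
        rw [Real.rpow_add h2, mul_assoc]

lemma near_term (n : ℕ) (γ : ℝ) (hγn : γ ≤ (n : ℝ))
    (f : EuclideanSpace ℝ (Fin n) → ℝ)
    (x : EuclideanSpace ℝ (Fin n)) {r : ℝ} (hr : 0 < r) (k : ℕ)
    (hvol : ∀ s : ℝ, 0 < s → volume (Metric.ball x s) =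
      ENNReal.ofReal (s ^ (n : ℝ)) * volume (Metric.ball (0 : EuclideanSpace ℝ (Fin n)) 1)) :
    ∫⁻ y in Metric.ball x (r * 2 ^ (-(k : ℝ))) \ Metric.ball x (r * 2 ^ (-((k : ℝ) + 1))),
      ENNReal.ofReal (f y) / ENNReal.ofReal (dist x y ^ ((n : ℝ) - γ))
    ≤ (ENNReal.ofReal (r ^ γ * 2 ^ ((n : ℝ) - γ)) *
        (volume (Metric.ball (0 : EuclideanSpace ℝ (Fin n)) 1) * hlMaximal n f x)) *
        ENNReal.ofReal ((2 : ℝ) ^ (-γ)) ^ k := by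
  have h2 : (0 : ℝ) < 2 := two_pos
  set c := volume (Metric.ball (0 : EuclideanSpace ℝ (Fin n)) 1) with hc
  set s := r * 2 ^ (-((k : ℝ) + 1)) with hsdef
  set t := r * 2 ^ (-(k : ℝ)) with htdef
  have hs : 0 < s := mul_pos hr (Real.rpow_pos_of_pos h2 _)
  have ht : 0 < t := mul_pos hr (Real.rpow_pos_of_pos h2 _)
  have hb : ∀ y ∈ Metric.ball x t \ Metric.ball x s,
      ENNReal.ofReal (f y) / ENNReal.ofReal (dist x y ^ ((n : ℝ) - γ)) ≤
        ENNReal.ofReal (s ^ (γ - (n : ℝ))) * ENNReal.ofReal (f y) := by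
    intro y hy
    have hdist : s ≤ dist x y := by
      have h := hy.2
      rw [Metric.mem_ball, not_lt] at h
      rwa [dist_comm]
    have hker : s ^ ((n : ℝ) - γ) ≤ dist x y ^ ((n : ℝ) - γ) :=
      Real.rpow_le_rpow hs.le hdist (by linarith)
    calc ENNReal.ofReal (f y) / ENNReal.ofReal (dist x y ^ ((n : ℝ) - γ))
        ≤ ENNReal.ofReal (f y) / ENNReal.ofReal (s ^ ((n : ℝ) - γ)) :=
          ENNReal.div_le_div_left (ENNReal.ofReal_le_ofReal hker) _
      _ = ENNReal.ofReal (s ^ (γ - (n : ℝ))) * ENNReal.ofReal (f y) := by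
          rw [ENNReal.div_eq_inv_mul, ← ENNReal.ofReal_inv_of_pos (Real.rpow_pos_of_pos hs _),
            ← Real.rpow_neg hs.le, neg_sub]
  calc ∫⁻ y in Metric.ball x t \ Metric.ball x s,
        ENNReal.ofReal (f y) / ENNReal.ofReal (dist x y ^ ((n : ℝ) - γ))
      ≤ ∫⁻ y in Metric.ball x t \ Metric.ball x s,
          ENNReal.ofReal (s ^ (γ - (n : ℝ))) * ENNReal.ofReal (f y) :=
        setLIntegral_mono' (measurableSet_ball.diff measurableSet_ball) hb
    _ = ENNReal.ofReal (s ^ (γ - (n : ℝ))) *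
          ∫⁻ y in Metric.ball x t \ Metric.ball x s, ENNReal.ofReal (f y) :=
        lintegral_const_mul' _ _ ENNReal.ofReal_ne_top
    _ ≤ ENNReal.ofReal (s ^ (γ - (n : ℝ))) * ∫⁻ y in Metric.ball x t, ENNReal.ofReal |f y| := by
        refine mul_le_mul_right ?_ _
        refine le_trans (lintegral_mono_set diff_subset) ?_
        exact lintegral_mono fun y => ENNReal.ofReal_le_ofReal (le_abs_self _)
    _ ≤ ENNReal.ofReal (s ^ (γ - (n : ℝ))) * (hlMaximal n f x * volume (Metric.ball x t)) :=
        mul_le_mul_right (ball_le_hl f x ht) _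
    _ = (ENNReal.ofReal (s ^ (γ - (n : ℝ))) * ENNReal.ofReal (t ^ (n : ℝ))) *
          (c * hlMaximal n f x) := by rw [hvol t ht]; ring
    _ = ENNReal.ofReal (s ^ (γ - (n : ℝ)) * t ^ (n : ℝ)) * (c * hlMaximal n f x) := by
        rw [ENNReal.ofReal_mul (Real.rpow_pos_of_pos hs _).le]
    _ = ENNReal.ofReal ((r ^ γ * 2 ^ ((n : ℝ) - γ)) * ((2 : ℝ) ^ (-γ)) ^ k) *
          (c * hlMaximal n f x) := by
        rw [hsdef, htdef, near_id hr γ (n : ℝ) k]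
    _ = (ENNReal.ofReal (r ^ γ * 2 ^ ((n : ℝ) - γ)) * (c * hlMaximal n f x)) *
          ENNReal.ofReal ((2 : ℝ) ^ (-γ)) ^ k := by
        rw [ENNReal.ofReal_mul (by positivity), ENNReal.ofReal_pow (by positivity)]; ring

lemma far_term (n : ℕ) (γ β : ℝ) (hγn : γ ≤ (n : ℝ))
    (f : EuclideanSpace ℝ (Fin n) → ℝ)
    (x : EuclideanSpace ℝ (Fin n)) {r : ℝ} (hr : 0 < r) (k : ℕ) :
    ∫⁻ y in Metric.ball x (r * 2 ^ ((k : ℝ) + 1)) \ Metric.ball x (r * 2 ^ (k : ℝ)),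
      ENNReal.ofReal (f y) / ENNReal.ofReal (dist x y ^ ((n : ℝ) - γ))
    ≤ (ENNReal.ofReal (r ^ (γ - β) * 2 ^ ((n : ℝ) - β)) * fracMaximal n β f x) *
        ENNReal.ofReal ((2 : ℝ) ^ (γ - β)) ^ k := by
  have h2 : (0 : ℝ) < 2 := two_pos
  set s := r * 2 ^ (k : ℝ) with hsdef
  set t := r * 2 ^ ((k : ℝ) + 1) with htdef
  have hs : 0 < s := mul_pos hr (Real.rpow_pos_of_pos h2 _)
  have ht : 0 < t := mul_pos hr (Real.rpow_pos_of_pos h2 _)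
  have hb : ∀ y ∈ Metric.ball x t \ Metric.ball x s,
      ENNReal.ofReal (f y) / ENNReal.ofReal (dist x y ^ ((n : ℝ) - γ)) ≤
        ENNReal.ofReal (s ^ (γ - (n : ℝ))) * ENNReal.ofReal (f y) := by
    intro y hy
    have hdist : s ≤ dist x y := by
      have h := hy.2
      rw [Metric.mem_ball, not_lt] at h
      rwa [dist_comm]
    have hker : s ^ ((n : ℝ) - γ) ≤ dist x y ^ ((n : ℝ) - γ) :=
      Real.rpow_le_rpow hs.le hdist (by linarith)
    calc ENNReal.ofReal (f y) / ENNReal.ofReal (dist x y ^ ((n : ℝ) - γ))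
        ≤ ENNReal.ofReal (f y) / ENNReal.ofReal (s ^ ((n : ℝ) - γ)) :=
          ENNReal.div_le_div_left (ENNReal.ofReal_le_ofReal hker) _
      _ = ENNReal.ofReal (s ^ (γ - (n : ℝ))) * ENNReal.ofReal (f y) := by
          rw [ENNReal.div_eq_inv_mul, ← ENNReal.ofReal_inv_of_pos (Real.rpow_pos_of_pos hs _),
            ← Real.rpow_neg hs.le, neg_sub]
  calc ∫⁻ y in Metric.ball x t \ Metric.ball x s,
        ENNReal.ofReal (f y) / ENNReal.ofReal (dist x y ^ ((n : ℝ) - γ))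
      ≤ ∫⁻ y in Metric.ball x t \ Metric.ball x s,
          ENNReal.ofReal (s ^ (γ - (n : ℝ))) * ENNReal.ofReal (f y) :=
        setLIntegral_mono' (measurableSet_ball.diff measurableSet_ball) hb
    _ = ENNReal.ofReal (s ^ (γ - (n : ℝ))) *
          ∫⁻ y in Metric.ball x t \ Metric.ball x s, ENNReal.ofReal (f y) :=
        lintegral_const_mul' _ _ ENNReal.ofReal_ne_top
    _ ≤ ENNReal.ofReal (s ^ (γ - (n : ℝ))) * ∫⁻ y in Metric.ball x t, ENNReal.ofReal |f y| := by
        refine mul_le_mul_right ?_ _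
        refine le_trans (lintegral_mono_set diff_subset) ?_
        exact lintegral_mono fun y => ENNReal.ofReal_le_ofReal (le_abs_self _)
    _ ≤ ENNReal.ofReal (s ^ (γ - (n : ℝ))) *
          (fracMaximal n β f x * ENNReal.ofReal (t ^ ((n : ℝ) - β))) :=
        mul_le_mul_right (ball_le_frac β f x ht) _
    _ = (ENNReal.ofReal (s ^ (γ - (n : ℝ))) * ENNReal.ofReal (t ^ ((n : ℝ) - β))) *
          fracMaximal n β f x := by ring
    _ = ENNReal.ofReal (s ^ (γ - (n : ℝ)) * t ^ ((n : ℝ) - β)) * fracMaximal n β f x := by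
        rw [ENNReal.ofReal_mul (Real.rpow_pos_of_pos hs _).le]
    _ = ENNReal.ofReal ((r ^ (γ - β) * 2 ^ ((n : ℝ) - β)) * ((2 : ℝ) ^ (γ - β)) ^ k) *
          fracMaximal n β f x := by
        rw [hsdef, htdef, far_id hr γ (n : ℝ) β k]
    _ = (ENNReal.ofReal (r ^ (γ - β) * 2 ^ ((n : ℝ) - β)) * fracMaximal n β f x) *
          ENNReal.ofReal ((2 : ℝ) ^ (γ - β)) ^ k := by
        rw [ENNReal.ofReal_mul (by positivity), ENNReal.ofReal_pow (by positivity)]; ring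

lemma riesz_split (n : ℕ) (β γ : ℝ) (hγ0 : 0 < γ) (hγβ : γ < β) (hβn : β < (n : ℝ))
    (f : EuclideanSpace ℝ (Fin n) → ℝ)
    (x : EuclideanSpace ℝ (Fin n)) {r : ℝ} (hr : 0 < r) :
    rieszPot n γ f x ≤
      (ENNReal.ofReal (2 ^ ((n : ℝ) - γ)) *
          volume (Metric.ball (0 : EuclideanSpace ℝ (Fin n)) 1) *
          (1 - ENNReal.ofReal (2 ^ (-γ)))⁻¹) * ENNReal.ofReal (r ^ γ) * hlMaximal n f x
      + (ENNReal.ofReal (2 ^ ((n : ℝ) - β)) * (1 - ENNReal.ofReal (2 ^ (γ - β)))⁻¹)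
          * ENNReal.ofReal (r ^ (γ - β)) * fracMaximal n β f x := by
  have hγn : γ ≤ (n : ℝ) := by linarith
  have hn0 : (0 : ℝ) < (n : ℝ) := by linarith
  have hn : 0 < n := by exact_mod_cast hn0
  haveI : Nontrivial (EuclideanSpace ℝ (Fin n)) := by
    apply Module.nontrivial_of_finrank_pos (R := ℝ)
    rw [finrank_euclideanSpace_fin]
    exact hn
  have hvol : ∀ s : ℝ, 0 < s → volume (Metric.ball x s) =
      ENNReal.ofReal (s ^ (n : ℝ)) * volume (Metric.ball (0 : EuclideanSpace ℝ (Fin n)) 1) := by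
    intro s hs
    rw [Measure.addHaar_ball volume x hs.le, finrank_euclideanSpace_fin, ← Real.rpow_natCast s n]
  set c := volume (Metric.ball (0 : EuclideanSpace ℝ (Fin n)) 1) with hcdef
  set g : EuclideanSpace ℝ (Fin n) → ℝ≥0∞ :=
    fun y => ENNReal.ofReal (f y) / ENNReal.ofReal (dist x y ^ ((n : ℝ) - γ)) with hg
  set U := ⋃ k : ℕ, (Metric.ball x (r * 2 ^ (-(k : ℝ))) \
    Metric.ball x (r * 2 ^ (-((k : ℝ) + 1)))) with hU
  set V := ⋃ k : ℕ, (Metric.ball x (r * 2 ^ ((k : ℝ) + 1)) \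
    Metric.ball x (r * 2 ^ (k : ℝ))) with hV
  have hcover : (univ : Set (EuclideanSpace ℝ (Fin n))) ⊆ (U ∪ V) ∪ {x} := by
    intro y _
    by_cases hxy : y = x
    · exact Or.inr (by simp [hxy])
    · have hd : 0 < dist x y := dist_pos.2 fun h => hxy h.symm
      by_cases hlt : dist x y < r
      · obtain ⟨k, h1, h2⟩ := near_mem hr hd hlt
        refine Or.inl (Or.inl (mem_iUnion.2 ⟨k, ?_, ?_⟩))
        · rw [Metric.mem_ball, dist_comm]; exact h1
        · rw [Metric.mem_ball, dist_comm, not_lt]; exact h2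
      · obtain ⟨k, h1, h2⟩ := far_mem hr (not_lt.1 hlt)
        refine Or.inl (Or.inr (mem_iUnion.2 ⟨k, ?_, ?_⟩))
        · rw [Metric.mem_ball, dist_comm]; exact h2
        · rw [Metric.mem_ball, dist_comm, not_lt]; exact h1
  have hq1 : (ENNReal.ofReal ((2 : ℝ) ^ (-γ))) < 1 := by
    rw [← ENNReal.ofReal_one]
    exact ENNReal.ofReal_lt_ofReal_iff_of_nonneg (by positivity) |>.2
      (Real.rpow_lt_one_of_one_lt_of_neg one_lt_two (by linarith))
  have hq2 : (ENNReal.ofReal ((2 : ℝ) ^ (γ - β))) < 1 := by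
    rw [← ENNReal.ofReal_one]
    exact ENNReal.ofReal_lt_ofReal_iff_of_nonneg (by positivity) |>.2
      (Real.rpow_lt_one_of_one_lt_of_neg one_lt_two (by linarith))
  have hUbound : ∫⁻ y in U, g y ≤
      (ENNReal.ofReal (2 ^ ((n : ℝ) - γ)) * c * (1 - ENNReal.ofReal (2 ^ (-γ)))⁻¹) *
        ENNReal.ofReal (r ^ γ) * hlMaximal n f x := by
    calc ∫⁻ y in U, g y
        ≤ ∑' k : ℕ, ∫⁻ y in Metric.ball x (r * 2 ^ (-(k : ℝ))) \
            Metric.ball x (r * 2 ^ (-((k : ℝ) + 1))), g y := lintegral_iUnion_le _ _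
      _ ≤ ∑' k : ℕ, (ENNReal.ofReal (r ^ γ * 2 ^ ((n : ℝ) - γ)) * (c * hlMaximal n f x)) *
            ENNReal.ofReal ((2 : ℝ) ^ (-γ)) ^ k :=
          ENNReal.tsum_le_tsum fun k => near_term n γ hγn f x hr k hvol
      _ = (ENNReal.ofReal (r ^ γ * 2 ^ ((n : ℝ) - γ)) * (c * hlMaximal n f x)) *
            (1 - ENNReal.ofReal ((2 : ℝ) ^ (-γ)))⁻¹ := by
          rw [ENNReal.tsum_mul_left, ENNReal.tsum_geometric]
      _ = _ := by
          rw [ENNReal.ofReal_mul (by positivity)]; ring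
  have hVbound : ∫⁻ y in V, g y ≤
      (ENNReal.ofReal (2 ^ ((n : ℝ) - β)) * (1 - ENNReal.ofReal (2 ^ (γ - β)))⁻¹) *
        ENNReal.ofReal (r ^ (γ - β)) * fracMaximal n β f x := by
    calc ∫⁻ y in V, g y
        ≤ ∑' k : ℕ, ∫⁻ y in Metric.ball x (r * 2 ^ ((k : ℝ) + 1)) \
            Metric.ball x (r * 2 ^ (k : ℝ)), g y := lintegral_iUnion_le _ _
      _ ≤ ∑' k : ℕ, (ENNReal.ofReal (r ^ (γ - β) * 2 ^ ((n : ℝ) - β)) * fracMaximal n β f x) *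
            ENNReal.ofReal ((2 : ℝ) ^ (γ - β)) ^ k :=
          ENNReal.tsum_le_tsum fun k => far_term n γ β hγn f x hr k
      _ = (ENNReal.ofReal (r ^ (γ - β) * 2 ^ ((n : ℝ) - β)) * fracMaximal n β f x) *
            (1 - ENNReal.ofReal ((2 : ℝ) ^ (γ - β)))⁻¹ := by
          rw [ENNReal.tsum_mul_left, ENNReal.tsum_geometric]
      _ = _ := by
          rw [ENNReal.ofReal_mul (by positivity)]; ring
  calc rieszPot n γ f x = ∫⁻ y in (univ : Set (EuclideanSpace ℝ (Fin n))), g y := by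
        rw [setLIntegral_univ]; rfl
    _ ≤ ∫⁻ y in (U ∪ V) ∪ {x}, g y := lintegral_mono_set hcover
    _ ≤ (∫⁻ y in U ∪ V, g y) + ∫⁻ y in ({x} : Set (EuclideanSpace ℝ (Fin n))), g y :=
        lintegral_union_le _ _ _
    _ = ∫⁻ y in U ∪ V, g y := by
        rw [setLIntegral_measure_zero _ _ (measure_singleton x), add_zero]
    _ ≤ (∫⁻ y in U, g y) + ∫⁻ y in V, g y := lintegral_union_le _ _ _
    _ ≤ _ := add_le_add hUbound hVbound

end Helpers


/-- Interpolation inequality `I_{θβ} f(x) ≤ C (M_β f(x))^θ (Mf(x))^{1-θ}`. -/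
theorem stmt_1 (n : ℕ) (β θ : ℝ) (hβ : 0 < β) (hβn : β < n) (hθ : θ ∈ Set.Ioo (0:ℝ) 1) :
    ∃ C : ℝ, 0 < C ∧
      ∀ f : EuclideanSpace ℝ (Fin n) → ℝ, Measurable f → (∀ y, 0 ≤ f y) →
      ∀ x : EuclideanSpace ℝ (Fin n),
        0 < hlMaximal n f x → 0 < fracMaximal n β f x → fracMaximal n β f x ≠ ⊤ →
        rieszPot n (θ * β) f x ≤
          ENNReal.ofReal C * (fracMaximal n β f x) ^ θ * (hlMaximal n f x) ^ (1 - θ) := by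
  obtain ⟨hθ0, hθ1⟩ := hθ
  set γ := θ * β with hγdef
  have hγ0 : 0 < γ := mul_pos hθ0 hβ
  have hγβ : γ < β := by nlinarith
  set q1 := ENNReal.ofReal ((2 : ℝ) ^ (-γ)) with hq1def
  set q2 := ENNReal.ofReal ((2 : ℝ) ^ (γ - β)) with hq2def
  set c := volume (Metric.ball (0 : EuclideanSpace ℝ (Fin n)) 1) with hcdef
  set K1 := ENNReal.ofReal (2 ^ ((n : ℝ) - γ)) * c * (1 - q1)⁻¹ with hK1
  set K2 := ENNReal.ofReal (2 ^ ((n : ℝ) - β)) * (1 - q2)⁻¹ with hK2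
  have hq1lt : q1 < 1 := by
    rw [hq1def, ← ENNReal.ofReal_one]
    exact ENNReal.ofReal_lt_ofReal_iff_of_nonneg (by positivity) |>.2
      (Real.rpow_lt_one_of_one_lt_of_neg one_lt_two (by linarith))
  have hq2lt : q2 < 1 := by
    rw [hq2def, ← ENNReal.ofReal_one]
    exact ENNReal.ofReal_lt_ofReal_iff_of_nonneg (by positivity) |>.2
      (Real.rpow_lt_one_of_one_lt_of_neg one_lt_two (by linarith))
  have h1ne : (1 - q1)⁻¹ ≠ ⊤ := by
    rw [ENNReal.inv_ne_top]
    exact (tsub_pos_of_lt hq1lt).ne'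
  have h2ne : (1 - q2)⁻¹ ≠ ⊤ := by
    rw [ENNReal.inv_ne_top]
    exact (tsub_pos_of_lt hq2lt).ne'
  have hK1t : K1 ≠ ⊤ :=
    ENNReal.mul_ne_top (ENNReal.mul_ne_top ENNReal.ofReal_ne_top measure_ball_lt_top.ne) h1ne
  have hK2t : K2 ≠ ⊤ := ENNReal.mul_ne_top ENNReal.ofReal_ne_top h2ne
  have hKt : K1 + K2 ≠ ⊤ := ENNReal.add_ne_top.2 ⟨hK1t, hK2t⟩
  refine ⟨(K1 + K2).toReal + 1, by positivity, ?_⟩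
  intro f hf h0 x hA hB hBt
  have hKC : K1 + K2 ≤ ENNReal.ofReal ((K1 + K2).toReal + 1) := by
    conv_lhs => rw [← ENNReal.ofReal_toReal hKt]
    exact ENNReal.ofReal_le_ofReal (by linarith)
  by_cases hAt : hlMaximal n f x = ⊤
  · rw [hAt]
    have h1 : (⊤ : ℝ≥0∞) ^ (1 - θ) = ⊤ := ENNReal.top_rpow_of_pos (by linarith)
    rw [h1, ENNReal.mul_top]
    · exact le_top
    · refine mul_ne_zero ?_ (ENNReal.rpow_pos hB hBt).ne'
      simp only [ne_eq, ENNReal.ofReal_eq_zero, not_le]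
      positivity
  · set a := (hlMaximal n f x).toReal with hadef
    set b := (fracMaximal n β f x).toReal with hbdef
    have ha : 0 < a := ENNReal.toReal_pos hA.ne' hAt
    have hb : 0 < b := ENNReal.toReal_pos hB.ne' hBt
    have hA' : hlMaximal n f x = ENNReal.ofReal a := (ENNReal.ofReal_toReal hAt).symm
    have hB' : fracMaximal n β f x = ENNReal.ofReal b := (ENNReal.ofReal_toReal hBt).symm
    have hba : 0 < b / a := div_pos hb ha
    set r := (b / a) ^ β⁻¹ with hrdef
    have hr : 0 < r := Real.rpow_pos_of_pos hba _
    have hrγ : r ^ γ = (b / a) ^ θ := by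
      rw [hrdef, ← Real.rpow_mul hba.le]
      congr 1
      rw [hγdef]
      field_simp
    have hrγβ : r ^ (γ - β) = (b / a) ^ (θ - 1) := by
      rw [hrdef, ← Real.rpow_mul hba.le]
      congr 1
      rw [hγdef]
      field_simp
    have hT1 : ENNReal.ofReal (r ^ γ) * hlMaximal n f x =
        ENNReal.ofReal (b ^ θ * a ^ (1 - θ)) := by
      rw [hA', hrγ, ← ENNReal.ofReal_mul (by positivity)]
      congr 1
      rw [Real.div_rpow hb.le ha.le, Real.rpow_sub ha, Real.rpow_one]
      field_simp
    have hT2 : ENNReal.ofReal (r ^ (γ - β)) * fracMaximal n β f x =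
        ENNReal.ofReal (b ^ θ * a ^ (1 - θ)) := by
      rw [hB', hrγβ, ← ENNReal.ofReal_mul (by positivity)]
      congr 1
      have ha1 : a ^ (1 - θ) * a ^ (θ - 1) = 1 := by
        rw [← Real.rpow_add ha]; norm_num
      have hb1 : b ^ (θ - 1) * b = b ^ θ := by
        rw [← Real.rpow_add_one hb.ne']; ring_nf
      rw [Real.div_rpow hb.le ha.le, div_mul_eq_mul_div, hb1, eq_comm,
        eq_div_iff (Real.rpow_pos_of_pos ha (θ - 1)).ne', mul_assoc, ha1, mul_one]
    calc rieszPot n γ f x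
        ≤ K1 * ENNReal.ofReal (r ^ γ) * hlMaximal n f x
          + K2 * ENNReal.ofReal (r ^ (γ - β)) * fracMaximal n β f x :=
          riesz_split n β γ hγ0 hγβ hβn f x hr
      _ = (K1 + K2) * ENNReal.ofReal (b ^ θ * a ^ (1 - θ)) := by
          rw [mul_assoc K1, mul_assoc K2, hT1, hT2]; ring
      _ ≤ ENNReal.ofReal ((K1 + K2).toReal + 1) * ENNReal.ofReal (b ^ θ * a ^ (1 - θ)) :=
          mul_le_mul_left hKC _
      _ = ENNReal.ofReal ((K1 + K2).toReal + 1) * (fracMaximal n β f x) ^ θ *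
            (hlMaximal n f x) ^ (1 - θ) := by
          rw [hA', hB', ENNReal.ofReal_rpow_of_pos hb, ENNReal.ofReal_rpow_of_pos ha,
            ENNReal.ofReal_mul (by positivity), mul_assoc]
end

section
/- Let 1 < p < q < ∞ and r = q/(q−p). Then the operator R_{p,q} g(t) = ( t^{-1} ∫_0^{t^r} (g^*(s))^p ds )^{1/p} is bounded from L^p(0,∞) to weak-L^p(0,∞): sup_{t>0} t^{1/p} (R_{p,q} g)^*(t) ≤ ‖g‖_{L^p(0,∞)} for every g ∈ L^p(0,∞). -/
open MeasureTheory Set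

/-- The nonincreasing rearrangement (w.r.t. Lebesgue measure on `(0,∞)`) of `g`. -/
noncomputable def rearr (g : ℝ → ℝ) (t : ℝ) : ℝ :=
  sInf {l : ℝ | 0 ≤ l ∧ volume {x : ℝ | 0 < x ∧ l < |g x|} ≤ ENNReal.ofReal t}

/-- The operator `R_{p,q} g(t) = ( t⁻¹ ∫_0^{t^r} (g^*(s))^p ds )^{1/p}`, `r = q/(q-p)`. -/
noncomputable def Rop (p q : ℝ) (g : ℝ → ℝ) (t : ℝ) : ℝ :=
  (t⁻¹ * ∫ s in Set.Ioc (0:ℝ) (t ^ (q / (q - p))), rearr g s ^ p) ^ (1 / p)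

/-!
Since `g^*` is equimeasurable with `|g|` (more precisely, its distribution function is no
larger), the layer cake formula gives `∫_0^b (g^*)^p ≤ ‖g‖_p^p` for every `b`, whatever the
exponent `r` of the upper limit. Hence `|R_{p,q} g(x)| ≤ (x⁻¹ ‖g‖_p^p)^{1/p}`, and a function
dominated by a nonincreasing `φ` on `(0,∞)` has `f^*(t) ≤ φ(t)`; for
`φ(x) = (x⁻¹ ‖g‖_p^p)^{1/p}` this is `t^{1/p} (R_{p,q} g)^*(t) ≤ ‖g‖_p`.
-/

section Rearrangement

variable {f g : ℝ → ℝ} {p : ℝ}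

lemma rearr_nonneg (g : ℝ → ℝ) (t : ℝ) : 0 ≤ rearr g t :=
  Real.sInf_nonneg fun _ hl => hl.1

lemma rearr_le_of_volume_le {t l : ℝ} (hl : 0 ≤ l)
    (h : volume {x : ℝ | 0 < x ∧ l < |g x|} ≤ ENNReal.ofReal t) : rearr g t ≤ l :=
  csInf_le ⟨0, fun _ hx => hx.1⟩ ⟨hl, h⟩

lemma rearr_le_of_abs_le {φ : ℝ → ℝ} {t : ℝ} (ht : 0 < t) (hφ : AntitoneOn φ (Ioi 0))
    (hφt : 0 ≤ φ t) (hf : ∀ x > 0, |f x| ≤ φ x) : rearr f t ≤ φ t := by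
  refine rearr_le_of_volume_le hφt ?_
  have hsub : {x : ℝ | 0 < x ∧ φ t < |f x|} ⊆ Ioc 0 t := fun x ⟨hx, hlt⟩ =>
    ⟨hx, le_of_not_ge fun htx => (hlt.trans_le (hf x hx)).not_ge (hφ ht hx htx)⟩
  simpa using measure_mono (μ := volume) hsub

lemma exists_volume_lt_abs_le (hg : AEMeasurable g (volume.restrict (Ioi 0))) (hp : 0 < p)
    (hC : ∫⁻ x in Ioi 0, ENNReal.ofReal (|g x| ^ p) ≠ ⊤) {s : ℝ} (hs : 0 < s) :
    ∃ l : ℝ, 0 ≤ l ∧ volume {x : ℝ | 0 < x ∧ l < |g x|} ≤ ENNReal.ofReal s := by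
  set C := ∫⁻ x in Ioi 0, ENNReal.ofReal (|g x| ^ p)
  have hs' : ENNReal.ofReal s ≠ 0 := by simpa using hs
  -- Chebyshev at the level `ε = C / s + 1`.
  set ε : ENNReal := C / ENNReal.ofReal s + 1
  have hε : ε ≠ ⊤ := ENNReal.add_ne_top.2 ⟨ENNReal.div_ne_top hC hs', ENNReal.one_ne_top⟩
  refine ⟨ε.toReal ^ (1 / p), by positivity, ?_⟩
  have hsub : {x : ℝ | 0 < x ∧ ε.toReal ^ (1 / p) < |g x|} ⊆
      {x | ε ≤ ENNReal.ofReal (|g x| ^ p)} ∩ Ioi 0 := by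
    rintro x ⟨hx, hlt⟩
    refine ⟨?_, hx⟩
    rw [← ENNReal.ofReal_toReal hε, ← Real.rpow_inv_rpow ENNReal.toReal_nonneg hp.ne', ← one_div]
    exact ENNReal.ofReal_le_ofReal (Real.rpow_le_rpow (by positivity) hlt.le hp.le)
  calc volume {x : ℝ | 0 < x ∧ ε.toReal ^ (1 / p) < |g x|}
      ≤ volume.restrict (Ioi 0) {x | ε ≤ ENNReal.ofReal (|g x| ^ p)} := by
        rw [Measure.restrict_apply' measurableSet_Ioi]; exact measure_mono hsub
    _ ≤ C / ε := meas_ge_le_lintegral_div (hg.abs.pow_const p).ennreal_ofReal (by simp [ε]) hε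
    _ ≤ ENNReal.ofReal s := by
        refine ENNReal.div_le_of_le_mul ?_
        calc C = ENNReal.ofReal s * (C / ENNReal.ofReal s) :=
              (ENNReal.mul_div_cancel hs' ENNReal.ofReal_ne_top).symm
          _ ≤ ENNReal.ofReal s * ε := by gcongr; exact le_self_add

lemma rearr_antitoneOn (hg : AEMeasurable g (volume.restrict (Ioi 0))) (hp : 0 < p)
    (hC : ∫⁻ x in Ioi 0, ENNReal.ofReal (|g x| ^ p) ≠ ⊤) :
    AntitoneOn (rearr g) (Ioi 0) := fun _ hs _ _ hst =>
  csInf_le_csInf ⟨0, fun _ hx => hx.1⟩ (exists_volume_lt_abs_le hg hp hC hs)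
    fun _ hl => ⟨hl.1, hl.2.trans (ENNReal.ofReal_le_ofReal hst)⟩

lemma volume_lt_rearr_le {l : ℝ} (hl : 0 ≤ l) :
    volume {s : ℝ | 0 < s ∧ l < rearr g s} ≤ volume {x : ℝ | 0 < x ∧ l < |g x|} := by
  set D := volume {x : ℝ | 0 < x ∧ l < |g x|}
  rcases eq_top_or_lt_top D with hD | hD
  · exact hD ▸ le_top
  have hsub : {s : ℝ | 0 < s ∧ l < rearr g s} ⊆ Ioc 0 D.toReal := by
    rintro s ⟨hs, hls⟩
    refine ⟨hs, le_of_not_gt fun hDs => hls.not_ge (rearr_le_of_volume_le hl ?_)⟩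
    exact (ENNReal.le_ofReal_iff_toReal_le hD.ne hs.le).2 hDs.le
  simpa [ENNReal.ofReal_toReal hD.ne] using measure_mono (μ := volume) hsub

lemma lintegral_rearr_rpow_le (hg : AEMeasurable g (volume.restrict (Ioi 0))) (hp : 0 < p)
    (hC : ∫⁻ x in Ioi 0, ENNReal.ofReal (|g x| ^ p) ≠ ⊤) :
    ∫⁻ s in Ioi 0, ENNReal.ofReal (rearr g s ^ p) ≤ ∫⁻ x in Ioi 0, ENNReal.ofReal (|g x| ^ p) := by
  rw [lintegral_rpow_eq_lintegral_meas_lt_mul _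
      (.of_forall fun s => rearr_nonneg g s)
      (aemeasurable_restrict_of_antitoneOn measurableSet_Ioi (rearr_antitoneOn hg hp hC)) hp,
    lintegral_rpow_eq_lintegral_meas_lt_mul _ (.of_forall fun x => abs_nonneg (g x)) hg.abs hp]
  refine mul_le_mul_right (lintegral_mono_ae ?_) _
  filter_upwards [self_mem_ae_restrict measurableSet_Ioi] with l (hl : 0 < l)
  refine mul_le_mul_left ?_ _
  rw [Measure.restrict_apply' measurableSet_Ioi, Measure.restrict_apply' measurableSet_Ioi,
    inter_comm, inter_comm {x | l < |g x|}]
  exact volume_lt_rearr_le hl.le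

lemma setIntegral_Ioc_rearr_rpow_le (hg : AEMeasurable g (volume.restrict (Ioi 0)))
    (hp : 0 < p) (hC : ∫⁻ x in Ioi 0, ENNReal.ofReal (|g x| ^ p) ≠ ⊤) (b : ℝ) :
    ∫ s in Ioc 0 b, rearr g s ^ p ≤ ∫ x in Ioi 0, |g x| ^ p := by
  have hmeas : AEMeasurable (rearr g) (volume.restrict (Ioc 0 b)) :=
    (aemeasurable_restrict_of_antitoneOn measurableSet_Ioi
      (rearr_antitoneOn hg hp hC)).mono_measure (Measure.restrict_mono Ioc_subset_Ioi_self le_rfl)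
  rw [integral_eq_lintegral_of_nonneg_ae (.of_forall fun s => Real.rpow_nonneg (rearr_nonneg g s) p)
      (hmeas.pow_const p).aestronglyMeasurable,
    integral_eq_lintegral_of_nonneg_ae (.of_forall fun x => by positivity)
      (hg.abs.pow_const p).aestronglyMeasurable]
  exact ENNReal.toReal_mono hC
    ((lintegral_mono_set Ioc_subset_Ioi_self).trans (lintegral_rearr_rpow_le hg hp hC))

end Rearrangement

lemma abs_rop_le {p q A x : ℝ} {g : ℝ → ℝ} (hp : 0 ≤ p) (hx : 0 < x)
    (hA : ∀ b, ∫ s in Ioc 0 b, rearr g s ^ p ≤ A) : |Rop p q g x| ≤ (x⁻¹ * A) ^ (1 / p) := by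
  have hJ : 0 ≤ ∫ s in Ioc 0 (x ^ (q / (q - p))), rearr g s ^ p :=
    setIntegral_nonneg measurableSet_Ioc fun s _ => Real.rpow_nonneg (rearr_nonneg g s) p
  rw [Rop, abs_of_nonneg (by positivity)]
  gcongr
  exact hA _

lemma antitoneOn_inv_mul_rpow {A p : ℝ} (hA : 0 ≤ A) (hp : 0 ≤ p) :
    AntitoneOn (fun x : ℝ => (x⁻¹ * A) ^ (1 / p)) (Ioi 0) :=
  fun x (hx : 0 < x) y (hy : 0 < y) hxy => by
    dsimp only
    gcongr

theorem stmt_3_general (p q : ℝ) (hp : 1 < p)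
    (g : ℝ → ℝ)
    (hgLp : MemLp g (ENNReal.ofReal p) (volume.restrict (Set.Ioi (0:ℝ)))) :
    ∀ t > 0, t ^ (1 / p) * rearr (Rop p q g) t ≤
      (∫ s in Set.Ioi (0:ℝ), |g s| ^ p) ^ (1 / p) := by
  intro t ht
  have hp0 : 0 < p := zero_lt_one.trans hp
  have hg : AEMeasurable g (volume.restrict (Ioi 0)) := hgLp.aestronglyMeasurable.aemeasurable
  have hC : ∫⁻ x in Ioi 0, ENNReal.ofReal (|g x| ^ p) ≠ ⊤ := by
    have := hgLp.integrable_norm_rpow (by simpa using hp0) ENNReal.ofReal_ne_top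
    simp only [ENNReal.toReal_ofReal hp0.le, Real.norm_eq_abs] at this
    exact this.lintegral_lt_top.ne
  set A := ∫ s in Ioi 0, |g s| ^ p
  have hA : 0 ≤ A := setIntegral_nonneg measurableSet_Ioi fun s _ => by positivity
  have hR : rearr (Rop p q g) t ≤ (t⁻¹ * A) ^ (1 / p) :=
    rearr_le_of_abs_le ht (antitoneOn_inv_mul_rpow hA hp0.le) (by positivity)
      fun x hx => abs_rop_le hp0.le hx (setIntegral_Ioc_rearr_rpow_le hg hp0 hC)
  calc t ^ (1 / p) * rearr (Rop p q g) t ≤ t ^ (1 / p) * (t⁻¹ * A) ^ (1 / p) := by gcongr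
    _ = A ^ (1 / p) := by
        rw [← Real.mul_rpow ht.le (by positivity), ← mul_assoc, mul_inv_cancel₀ ht.ne', one_mul]

/-- `R_{p,q}` is bounded from `L^p(0,∞)` to weak-`L^p(0,∞)`, with constant one:
`sup_{t>0} t^{1/p} (R_{p,q} g)^*(t) ≤ ‖g‖_{L^p(0,∞)}`. -/
theorem stmt_3 (p q : ℝ) (hp : 1 < p) (hpq : p < q)
    (g : ℝ → ℝ) (hg : Measurable g)
    (hgLp : MemLp g (ENNReal.ofReal p) (volume.restrict (Set.Ioi (0:ℝ)))) :
    ∀ t > 0, t ^ (1 / p) * rearr (Rop p q g) t ≤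
      (∫ s in Set.Ioi (0:ℝ), |g s| ^ p) ^ (1 / p) :=
  stmt_3_general p q hp g hgLp
end

section
/- Let 1 < p < q < ∞ and r = q/(q−p). Suppose the inequality sup_{t>0} (h^{**}(t))^{1/p} t^{1/q + 1/(r r₂)} ≤ C sup_{t>0} t^{1/r₁} (h^*(t))^{1/p} holds for all measurable h : (0,∞) → [0,∞) with a constant C independent of h. Then necessarily r₁ > p and 1/q + 1/(r r₂) = 1/r₁. -/
/-! Testing with `h = χ_(0,a)`, which is its own rearrangement and has `h**(a) = 1`, gives
`a ^ α ≤ C a ^ (1/r₁)` for every `a > 0`, where `α = 1/q + 1/(r r₂)`; letting `a → 0` and `a → ∞`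
forces `α = 1/r₁`. If `r₁ ≤ p`, the truncated powers `h_ε(x) = max(x, ε) ^ (-p/r₁)` keep the
right-hand side at most `C`, while `h_ε**(1) ≥ log (1/ε)` is unbounded as `ε → 0`. -/

open MeasureTheory Set

/-- The maximal (level) function `h^{**}(t) = t⁻¹ ∫_0^t h^*(s) ds`. -/
noncomputable def dstar (h : ℝ → ℝ) (t : ℝ) : ℝ :=
  t⁻¹ * ∫ s in Set.Ioc (0:ℝ) t, rearr h s

/- Lower semicontinuity from the right is what excludes levels `l < f t`: it makes
`{x > 0 | l < f x}` contain an interval `(0, u)` with `u > t`. -/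
theorem rearr_eq_self_of_antitoneOn {f : ℝ → ℝ} {t : ℝ} (ht : 0 < t)
    (hf₀ : ∀ x, 0 < x → 0 ≤ f x) (hf : AntitoneOn f (Ioi 0))
    (hlsc : LowerSemicontinuousWithinAt f (Ici t) t) : rearr f t = f t := by
  have habs : ∀ x, 0 < x → |f x| = f x := fun x hx => abs_of_nonneg (hf₀ x hx)
  have hmem : f t ∈ {l : ℝ | 0 ≤ l ∧ volume {x : ℝ | 0 < x ∧ l < |f x|} ≤ ENNReal.ofReal t} := by
    refine ⟨hf₀ t ht, ?_⟩
    calc volume {x : ℝ | 0 < x ∧ f t < |f x|}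
        ≤ volume (Ioo 0 t) := measure_mono fun x ⟨hx, hlt⟩ =>
          ⟨hx, lt_of_not_ge fun htx => (hlt.trans_eq (habs x hx)).not_ge (hf ht hx htx)⟩
      _ = ENNReal.ofReal t := by rw [Real.volume_Ioo, sub_zero]
  refine le_antisymm (csInf_le ⟨0, fun l hl => hl.1⟩ hmem) (le_csInf ⟨_, hmem⟩ ?_)
  rintro l ⟨-, hvol⟩
  by_contra! hl
  obtain ⟨u, htu, hu⟩ := mem_nhdsGE_iff_exists_Ico_subset.1 (hlsc l hl)
  have hsub : Ioo 0 u ⊆ {x : ℝ | 0 < x ∧ l < |f x|} := by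
    rintro x ⟨hx, hxu⟩
    refine ⟨hx, (habs x hx).symm ▸ ?_⟩
    rcases lt_or_ge x t with hxt | htx
    · exact hl.trans_le (hf hx ht hxt.le)
    · exact hu ⟨htx, hxu⟩
  have hut : ENNReal.ofReal u ≤ ENNReal.ofReal t := by
    simpa [Real.volume_Ioo] using (measure_mono hsub).trans hvol
  exact (ENNReal.ofReal_le_ofReal_iff ht.le).1 hut |>.not_gt htu

theorem antitoneOn_indicator_Ioo (a : ℝ) :
    AntitoneOn ((Ioo 0 a).indicator fun _ => (1 : ℝ)) (Ioi 0) := by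
  intro x hx y _ hxy
  by_cases hy : y ∈ Ioo 0 a
  · rw [indicator_of_mem hy, indicator_of_mem (show x ∈ Ioo 0 a from ⟨hx, hxy.trans_lt hy.2⟩)]
  · rw [indicator_of_notMem hy]
    exact indicator_nonneg (fun _ _ => zero_le_one) x

theorem rearr_indicator_Ioo {a t : ℝ} (ht : 0 < t) :
    rearr ((Ioo 0 a).indicator fun _ => 1) t = (Ioo 0 a).indicator (fun _ => 1) t :=
  rearr_eq_self_of_antitoneOn ht (fun x _ => indicator_nonneg (fun _ _ => zero_le_one) x)
    (antitoneOn_indicator_Ioo a) (isOpen_Ioo.lowerSemicontinuousWithinAt_indicator zero_le_one)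

theorem dstar_indicator_Ioo {a : ℝ} (ha : 0 < a) :
    dstar ((Ioo 0 a).indicator fun _ => 1) a = 1 := by
  rw [dstar, integral_Ioc_eq_integral_Ioo, setIntegral_congr_fun measurableSet_Ioo
    fun s hs => by rw [rearr_indicator_Ioo hs.1, indicator_of_mem hs]]
  simp [ha.le, ha.ne']

theorem rpow_mul_rearr_indicator_Ioo_rpow_le {a γ s t : ℝ} (ha : 0 ≤ a) (hγ : 0 ≤ γ)
    (hs : s ≠ 0) (ht : 0 < t) :
    t ^ γ * rearr ((Ioo 0 a).indicator fun _ => 1) t ^ s ≤ a ^ γ := by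
  rw [rearr_indicator_Ioo ht]
  by_cases hta : t ∈ Ioo 0 a
  · rw [indicator_of_mem hta, Real.one_rpow, mul_one]
    exact Real.rpow_le_rpow ht.le hta.2.le hγ
  · rw [indicator_of_notMem hta, Real.zero_rpow hs, mul_zero]
    exact Real.rpow_nonneg ha _

theorem eq_of_forall_rpow_le_mul_rpow {α γ C : ℝ} (h : ∀ a : ℝ, 0 < a → a ^ α ≤ C * a ^ γ) :
    α = γ := by
  have hC : 1 ≤ C := by simpa using h 1 one_pos
  by_contra hne
  have hδ : α - γ ≠ 0 := sub_ne_zero.2 hne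
  set a := (C + 1) ^ (α - γ)⁻¹
  have ha : 0 < a := by positivity
  have haδ : a ^ (α - γ) = C + 1 := by
    rw [← Real.rpow_mul (by linarith), inv_mul_cancel₀ hδ, Real.rpow_one]
  have hsplit : a ^ α = a ^ (α - γ) * a ^ γ := by rw [← Real.rpow_add ha, sub_add_cancel]
  have := h a ha
  rw [hsplit, haδ] at this
  linarith [le_of_mul_le_mul_right this (by positivity)]

theorem continuous_max_rpow {ε : ℝ} (hε : 0 < ε) (β : ℝ) :
    Continuous fun x : ℝ => max x ε ^ β :=
  (continuous_id.max continuous_const).rpow_const fun _ => Or.inl (lt_max_of_lt_right hε).ne'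

theorem rearr_max_rpow_neg {ε β t : ℝ} (hε : 0 < ε) (hβ : 0 ≤ β) (ht : 0 < t) :
    rearr (fun x => max x ε ^ (-β)) t = max t ε ^ (-β) := by
  refine rearr_eq_self_of_antitoneOn ht (fun x _ => by positivity) ?_
    ((continuous_max_rpow hε _).lowerSemicontinuous.lowerSemicontinuousWithinAt _ _)
  intro x _ y _ hxy
  exact Real.rpow_le_rpow_of_nonpos (lt_max_of_lt_right hε) (max_le_max_right ε hxy)
    (neg_nonpos.2 hβ)

theorem rpow_mul_max_rpow_neg_le_one {γ ε t : ℝ} (hγ : 0 ≤ γ) (hε : 0 < ε) (ht : 0 ≤ t) :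
    t ^ γ * max t ε ^ (-γ) ≤ 1 := by
  have hm : 0 < max t ε := lt_max_of_lt_right hε
  calc t ^ γ * max t ε ^ (-γ) ≤ max t ε ^ γ * max t ε ^ (-γ) := by
        gcongr
        exact le_max_left t ε
    _ = 1 := by rw [← Real.rpow_add hm, add_neg_cancel, Real.rpow_zero]

theorem exists_lt_dstar_max_rpow_neg {β : ℝ} (hβ : 1 ≤ β) (B : ℝ) :
    ∃ ε > 0, B < dstar (fun x => max x ε ^ (-β)) 1 := by
  set ε := Real.exp (-(|B| + 1))
  have hε : 0 < ε := Real.exp_pos _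
  have hε₁ : ε ≤ 1 := Real.exp_le_one_iff.2 (by linarith [abs_nonneg B])
  have hint : IntegrableOn (fun s => max s ε ^ (-β)) (Ioc 0 1) :=
    (continuous_max_rpow hε _).integrableOn_Ioc
  have hinv : IntegrableOn (fun s : ℝ => s⁻¹) (Ioc ε 1) :=
    ((continuousOn_id.inv₀ fun x hx => (hε.trans_le hx.1).ne').integrableOn_compact
      isCompact_Icc).mono_set Ioc_subset_Icc_self
  refine ⟨ε, hε, ?_⟩
  calc B < |B| + 1 := by linarith [le_abs_self B]
    _ = ∫ s in ε..1, s⁻¹ := by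
        rw [integral_inv (by simp [uIcc_of_le hε₁, not_le.2 hε]), one_div, Real.log_inv,
          Real.log_exp, neg_neg]
    _ = ∫ s in Ioc ε 1, s⁻¹ := intervalIntegral.integral_of_le hε₁
    _ ≤ ∫ s in Ioc ε 1, max s ε ^ (-β) := by
        refine setIntegral_mono_on hinv (hint.mono_set (Ioc_subset_Ioc_left hε.le))
          measurableSet_Ioc fun s hs => ?_
        rw [max_eq_left hs.1.le, ← Real.rpow_neg_one]
        exact Real.rpow_le_rpow_of_exponent_ge (hε.trans hs.1) hs.2 (neg_le_neg hβ)
    _ ≤ ∫ s in Ioc 0 1, max s ε ^ (-β) :=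
        setIntegral_mono_set hint (.of_forall fun s => by positivity)
          (Ioc_subset_Ioc_left hε.le).eventuallyLE
    _ = dstar (fun x => max x ε ^ (-β)) 1 := by
        rw [dstar, inv_one, one_mul]
        exact setIntegral_congr_fun measurableSet_Ioc fun s hs =>
          (rearr_max_rpow_neg hε (by linarith) hs.1).symm

theorem stmt_8_general (p q r₁ r₂ : ℝ) (hp : 1 < p)
    (hr₁ : 0 < r₁) (C : ℝ)
    (hC : ∀ h : ℝ → ℝ, Measurable h → (∀ x, 0 ≤ h x) →
      ∀ M : ℝ, (∀ t > 0, t ^ (1 / r₁) * (rearr h t) ^ (1 / p) ≤ M) →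
      ∀ t > 0, (dstar h t) ^ (1 / p) * t ^ (1 / q + 1 / ((q / (q - p)) * r₂)) ≤ C * M) :
    p < r₁ ∧ 1 / q + 1 / ((q / (q - p)) * r₂) = 1 / r₁ := by
  have hp₀ : 0 < p := by linarith
  have hA : ∀ a : ℝ, 0 < a → a ^ (1 / q + 1 / ((q / (q - p)) * r₂)) ≤ C * a ^ (1 / r₁) :=
    fun a ha => by
      simpa [dstar_indicator_Ioo ha] using
        hC _ (measurable_const.indicator measurableSet_Ioo)
          (indicator_nonneg fun _ _ => zero_le_one) _
          (fun t ht => rpow_mul_rearr_indicator_Ioo_rpow_le ha.le (by positivity)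
            (by positivity) ht) a ha
  have hC₁ : 1 ≤ C := by simpa using hA 1 one_pos
  refine ⟨?_, eq_of_forall_rpow_le_mul_rpow hA⟩
  by_contra! hle
  obtain ⟨ε, hε, hgt⟩ := exists_lt_dstar_max_rpow_neg ((one_le_div hr₁).2 hle) (C ^ p)
  have hM : ∀ t > 0, t ^ (1 / r₁) * rearr (fun x => max x ε ^ (-(p / r₁))) t ^ (1 / p) ≤ 1 := by
    intro t ht
    rw [rearr_max_rpow_neg hε (by positivity) ht, ← Real.rpow_mul (by positivity),
      show -(p / r₁) * (1 / p) = -(1 / r₁) by field_simp]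
    exact rpow_mul_max_rpow_neg_le_one (by positivity) hε ht.le
  have hupper := hC _ (continuous_max_rpow hε _).measurable (fun x => by positivity) 1 hM 1 one_pos
  have hCp : 0 ≤ C ^ p := Real.rpow_nonneg (by linarith) p
  rw [Real.one_rpow, mul_one, mul_one, one_div,
    Real.rpow_inv_le_iff_of_pos (hCp.trans hgt.le) (by linarith) hp₀] at hupper
  linarith

/-- Necessity: if `sup_t (h^{**}(t))^{1/p} t^{1/q+1/(r r₂)} ≤ C sup_t t^{1/r₁} (h^*(t))^{1/p}`
holds for all nonnegative measurable `h`, then `r₁ > p` and `1/q + 1/(r r₂) = 1/r₁`. -/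
theorem stmt_8 (p q r₁ r₂ : ℝ) (hp : 1 < p) (hpq : p < q)
    (hr₁ : 0 < r₁) (hr₂ : 0 < r₂) (C : ℝ)
    (hC : ∀ h : ℝ → ℝ, Measurable h → (∀ x, 0 ≤ h x) →
      ∀ M : ℝ, (∀ t > 0, t ^ (1 / r₁) * (rearr h t) ^ (1 / p) ≤ M) →
      ∀ t > 0, (dstar h t) ^ (1 / p) * t ^ (1 / q + 1 / ((q / (q - p)) * r₂)) ≤ C * M) :
    p < r₁ ∧ 1 / q + 1 / ((q / (q - p)) * r₂) = 1 / r₁ :=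
  stmt_8_general p q r₁ r₂ hp hr₁ C hC
end
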